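/- Let W be an admissible word of Z(A) with base LpR, let θ be a rule of Z(A) applicable to W, and let t > 1 be a natural number. Then there is at most one reduced computation W →_θ W₁ → ⋯ → W_t of length t beginning with the application of θ in which all the words W, W₁, …, W_t have the same length. -/

import Mathlib

/-!
A step that preserves the length of a word with base `L p R` either cancels the tape letter
next to `p` on one side and creates one on the other, or (for `r₁₂^{±1}`) replaces the last
letter of the `Lp`-sector, or is `r₁₃^{±1}` resp. `r₂₁^{±1}`, which need an empty `Lp`-
resp. `pR`-sector. So its rule is read off from one of the two sectors, and at most two rules
continue a length-preserving computation from a given word. After a step by `θ` the rule `θ⁻¹`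
is readable from the new word and is excluded by reducedness of the history; so the next rule
is unique, and as the result of a step depends only on the word and the rule, induction along
the computation gives the claim.
-/

set_option maxHeartbeats 1000000

namespace SM

/-! ### Generic S-machine framework

Words are lists of (letter, sign) pairs; `true` is a positive occurrence.
An S-machine has state letters (`Q`) and tape letters (`Y`).  Each state
letter has a sector index on its left (`ls`) and on its right (`rs`);
sector `s` carries the tape alphabet `inY s`. -/

abbrev Wrd (Y : Type) := List (Y × Bool)

def wInv {Y : Type} (w : Wrd Y) : Wrd Y := w.reverse.map fun x => (x.1, !x.2)

def IsReduced {Y : Type} (w : Wrd Y) : Prop :=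
  List.Chain' (fun a b => ¬ (b.1 = a.1 ∧ b.2 = !a.2)) w

structure Machine (Q Y : Type) where
  ls : Q → ℕ
  rs : Q → ℕ
  inY : ℕ → Y → Prop

/-- A rule replaces each state letter `q` in its domain by a word `u q' v`
(`act q = some (u, q', v)`), and carries the subsets `Y_i(θ)` (`ys`). -/
structure Rule (Q Y : Type) where
  act : Q → Option (Wrd Y × Q × Wrd Y)
  ys : ℕ → Y → Prop

/-- Sector to the right of an occurrence of a state letter. -/
def secR {Q Y : Type} (M : Machine Q Y) (x : Q × Bool) : ℕ :=
  if x.2 then M.rs x.1 else M.ls x.1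

/-- Sector to the left of an occurrence of a state letter. -/
def secL {Q Y : Type} (M : Machine Q Y) (x : Q × Bool) : ℕ :=
  if x.2 then M.ls x.1 else M.rs x.1

def qd {Q : Type} [Inhabited Q] (l : List (Q × Bool)) (j : ℕ) : Q × Bool :=
  l.getD j (default, true)

/-- An admissible word: state-letter occurrences `qs` (the base) alternating
with reduced tape words `tapes`, with consistent sectors, each tape word
over the alphabet of its sector, and the whole word freely reduced. -/
structure AdmWord {Q Y : Type} [Inhabited Q] (M : Machine Q Y) where
  qs : List (Q × Bool)
  tapes : List (Wrd Y)
  qs_ne : qs ≠ []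
  hlen : tapes.length + 1 = qs.length
  consist : ∀ j, j + 1 < qs.length → secR M (qd qs j) = secL M (qd qs (j + 1))
  alph : ∀ j, j + 1 < qs.length → ∀ x ∈ tapes.getD j [], M.inY (secR M (qd qs j)) x.1
  tred : ∀ j, IsReduced (tapes.getD j [])
  qred : ∀ j, j + 1 < qs.length → (qd qs (j + 1)).1 = (qd qs j).1 →
      (qd qs (j + 1)).2 = !(qd qs j).2 → tapes.getD j [] ≠ []

/-- `|W|_a` : the number of tape letters of `W`. -/
def alen {Q Y : Type} [Inhabited Q] {M : Machine Q Y} (W : AdmWord M) : ℕ :=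
  (W.tapes.map List.length).sum

/-- `|W|` : the length of `W`. -/
def wlen {Q Y : Type} [Inhabited Q] {M : Machine Q Y} (W : AdmWord M) : ℕ :=
  W.qs.length + alen W

/-- Replacement of a single (signed) state-letter occurrence by a rule. -/
def occRepl {Q Y : Type} (r : Rule Q Y) : Q × Bool → Option (Wrd Y × (Q × Bool) × Wrd Y)
  | (q, true) => (r.act q).map fun x => (x.1, (x.2.1, true), x.2.2)
  | (q, false) => (r.act q).map fun x => (wInv x.2.2, (x.2.1, false), wInv x.1)

/-- `Step M r W W'` : the rule `r` is applicable to `W` and `W' = r · W`. -/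
def Step {Q Y : Type} [Inhabited Q] (M : Machine Q Y) (r : Rule Q Y)
    (W W' : AdmWord M) : Prop :=
  W.qs.length = W'.qs.length ∧
  (∀ j, j + 1 < W.qs.length → ∀ x ∈ W.tapes.getD j [], r.ys (secR M (qd W.qs j)) x.1) ∧
  (∀ j, j < W.qs.length → ∃ u v, occRepl r (qd W.qs j) = some (u, qd W'.qs j, v)) ∧
  (∀ j, j + 1 < W.qs.length → ∀ u v u' v',
    occRepl r (qd W.qs j) = some (u, qd W'.qs j, v) →
    occRepl r (qd W.qs (j + 1)) = some (u', qd W'.qs (j + 1), v') →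
    FreeGroup.mk (W'.tapes.getD j []) = FreeGroup.mk (v ++ W.tapes.getD j [] ++ u'))

/-! ### The machine `Z(A)`

State letters `L, p(1), p(2), p(3), R`; sector `0` is the `Lp`-sector with
alphabet `A₀ ∪ A₁`, sector `1` is the `pR`-sector with alphabet `A₀`.
A tape letter is a pair `(a, i)` with `i = false` for `a₀ ∈ A₀` and
`i = true` for `a₁ ∈ A₁`. -/

inductive ZQ
  | L | p1 | p2 | p3 | R
deriving DecidableEq, Inhabited

abbrev ZY (A : Type) := A × Bool

def ZM (A : Type) : Machine ZQ (ZY A) where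
  ls := fun q => match q with | .L => 9 | .R => 1 | _ => 0
  rs := fun q => match q with | .L => 0 | .R => 9 | _ => 1
  inY := fun s y => s = 0 ∨ (s = 1 ∧ y.2 = false)

inductive ZRulN (A : Type)
  | r1 (a : A) | r12 (a : A) | r2 (a : A) | r21 | r13 | r3 (a : A)
deriving DecidableEq

/-- A rule of `Z(A)`: a rule name together with an inversion flag. -/
abbrev ZRul (A : Type) := ZRulN A × Bool

def zinv (A : Type) : ZRul A → ZRul A := fun x => (x.1, !x.2)

/-- Action of the positive rules of `Z(A)` on state letters. -/
def zactN (A : Type) : ZRulN A → ZQ → Option (Wrd (ZY A) × ZQ × Wrd (ZY A))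
  | _, .L => some ([], .L, [])
  | _, .R => some ([], .R, [])
  | .r1 a, .p1 => some ([((a, true), false)], .p1, [((a, false), true)])
  | .r12 a, .p1 => some ([((a, false), false), ((a, true), true)], .p2, [])
  | .r2 a, .p2 => some ([((a, false), true)], .p2, [((a, false), false)])
  | .r21, .p2 => some ([], .p1, [])
  | .r13, .p1 => some ([], .p3, [])
  | .r3 a, .p3 => some ([((a, false), true)], .p3, [((a, false), false)])
  | _, _ => none

/-- Action of the rules of `Z(A)` (including inverse rules). -/
def zact (A : Type) : ZRul A → ZQ → Option (Wrd (ZY A) × ZQ × Wrd (ZY A))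
  | (n, false), q => zactN A n q
  | (_, true), .L => some ([], .L, [])
  | (_, true), .R => some ([], .R, [])
  | (.r1 a, true), .p1 => some ([((a, true), true)], .p1, [((a, false), false)])
  | (.r12 a, true), .p2 => some ([((a, true), false), ((a, false), true)], .p1, [])
  | (.r2 a, true), .p2 => some ([((a, false), false)], .p2, [((a, false), true)])
  | (.r21, true), .p1 => some ([], .p2, [])
  | (.r13, true), .p3 => some ([], .p1, [])
  | (.r3 a, true), .p3 => some ([((a, false), false)], .p3, [((a, false), true)])
  | (_, true), _ => none

/-- The sets `Y_i(θ)` of the rules of `Z(A)`. -/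
def zysN (A : Type) : ZRulN A → ℕ → ZY A → Prop
  | .r21, s, _ => s = 0
  | .r13, s, y => s = 1 ∧ y.2 = false
  | .r3 _, s, y => (s = 0 ∨ s = 1) ∧ y.2 = false
  | _, s, y => s = 0 ∨ (s = 1 ∧ y.2 = false)

def zys (A : Type) (r : ZRul A) : ℕ → ZY A → Prop := zysN A r.1

def zrule (A : Type) (r : ZRul A) : Rule ZQ (ZY A) := ⟨zact A r, zys A r⟩

/-- A reduced computation of the machine `Z(A)`:
`W 0 →_{h 0} W 1 →_{h 1} ⋯ →_{h (t-1)} W t` with freely reduced history. -/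
structure ZComp (A : Type) where
  t : ℕ
  W : ℕ → AdmWord (ZM A)
  h : ℕ → ZRul A
  steps : ∀ i, i < t → Step (ZM A) (zrule A (h i)) (W i) (W (i + 1))
  red : ∀ i, i + 1 < t → h (i + 1) ≠ zinv A (h i)

def isP (q : ZQ) : Prop := q = .p1 ∨ q = .p2 ∨ q = .p3

def baseLpR {A : Type} (W : AdmWord (ZM A)) : Prop :=
  ∃ p, isP p ∧ W.qs = [(ZQ.L, true), (p, true), (ZQ.R, true)]

def baseIPR {A : Type} (W : AdmWord (ZM A)) : Prop :=
  ∃ p p', isP p ∧ isP p' ∧ W.qs = [(p, false), (p', true), (ZQ.R, true)]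

/-- For a three-letter base ending with `R`: `W` contains the subword `st·R`. -/
def hasPR {A : Type} (W : AdmWord (ZM A)) (st : ZQ) : Prop :=
  qd W.qs 1 = (st, true) ∧ W.tapes.getD 1 [] = []

/-- All tape letters of `W` lie in `A₀^{±1}`. -/
def allA0 {A : Type} (W : AdmWord (ZM A)) : Prop :=
  ∀ j, ∀ x ∈ W.tapes.getD j [], x.1.2 = false

/-- `u` is a positive word over `A₀`. -/
def Pos0 {A : Type} (u : Wrd (ZY A)) : Prop :=
  ∀ x ∈ u, x.2 = true ∧ x.1.2 = false

/-- Projection of a tape word onto `A` (sending `a₀, a₁` to `a`). -/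
def projA {A : Type} (w : Wrd (ZY A)) : Wrd A := w.map fun x => (x.1.1, x.2)

end SM

namespace FreeGroup

variable {α : Type} {x x₁ y y₁ : List (α × Bool)} {c d : α × Bool}

theorem IsReduced.eq_of_mk_eq (hx : IsReduced x) (hy : IsReduced y) (h : mk x = mk y) :
    x = y := by
  classical
  rw [← hx.reduce_eq, ← hy.reduce_eq]
  exact reduce.sound h

theorem IsReduced.invRev (hx : IsReduced x) : IsReduced (invRev x) := by
  classical
  rw [isReduced_iff_reduce_eq, reduce_invRev, hx.reduce_eq]

theorem IsReduced.eq_or_eq_of_mk_eq_mk_cons (hy : IsReduced y) (hy₁ : IsReduced y₁)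
    (h : mk y₁ = mk (c :: y)) : y = (c.1, !c.2) :: y₁ ∨ y₁ = c :: y := by
  classical
  have hred : y₁ = reduce (c :: y) := by rw [← hy₁.reduce_eq]; exact reduce.sound h
  rw [reduce.cons, hy.reduce_eq] at hred
  rcases y with _ | ⟨d, t⟩
  · exact Or.inr hred
  · dsimp only at hred
    split_ifs at hred with hcd
    · left; subst hred; obtain ⟨c1, c2⟩ := c; obtain ⟨d1, d2⟩ := d; simp_all
    · exact Or.inr hred

theorem IsReduced.eq_or_eq_of_mk_eq_mk_append (hx : IsReduced x) (hx₁ : IsReduced x₁)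
    (h : mk x₁ = mk (x ++ [c])) : x = x₁ ++ [(c.1, !c.2)] ∨ x₁ = x ++ [c] := by
  have hinv : mk (FreeGroup.invRev x₁) = mk ((c.1, !c.2) :: FreeGroup.invRev x) := by
    rw [← inv_mk, h, inv_mk]; simp [FreeGroup.invRev]
  rcases hx.invRev.eq_or_eq_of_mk_eq_mk_cons hx₁.invRev hinv with hrev | hrev <;>
    replace hrev := congrArg FreeGroup.invRev hrev <;>
    rw [invRev_invRev, invRev_cons, invRev_invRev] at hrev
  · exact .inl (by simpa [FreeGroup.invRev] using hrev)
  · exact .inr (by simpa [FreeGroup.invRev] using hrev)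

theorem IsReduced.exists_eq_of_mk_eq_mk_append_pair (hx : IsReduced x) (hx₁ : IsReduced x₁)
    (h : mk x₁ = mk (x ++ [c, d])) (hcd : d.1 ≠ c.1) (hlen : x₁.length = x.length) :
    ∃ t, x = t ++ [(c.1, !c.2)] ∧ x₁ = t ++ [d] := by
  classical
  obtain ⟨x', hx'red, hx'mk⟩ : ∃ x', IsReduced x' ∧ mk x' = mk (x ++ [c]) :=
    ⟨_, isReduced_toWord, mk_toWord⟩
  have h' : mk x₁ = mk (x' ++ [d]) := by
    rw [← mul_mk, hx'mk, mul_mk, h, List.append_assoc, List.singleton_append]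
  rcases hx.eq_or_eq_of_mk_eq_mk_append hx'red hx'mk with hx' | hx' <;>
    rcases hx'red.eq_or_eq_of_mk_eq_mk_append hx₁ h' with hx₁' | hx₁'
  · rw [hx', hx₁'] at hlen; simp at hlen
  · exact ⟨x', hx', hx₁'⟩
  · rw [hx'] at hx₁'
    obtain ⟨-, hc⟩ := List.append_inj' hx₁' rfl
    exact absurd (congrArg Prod.fst (List.singleton_inj.mp hc)).symm hcd
  · rw [hx₁', hx'] at hlen; simp at hlen

end FreeGroup

namespace SM

theorem isReduced_iff {α : Type} {w : Wrd α} : IsReduced w ↔ FreeGroup.IsReduced w := by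
  refine List.IsChain.iff fun a b => ?_
  obtain ⟨a1, a2⟩ := a; obtain ⟨b1, b2⟩ := b
  cases a2 <;> cases b2 <;> simp [eq_comm]

theorem eq_of_eq_some_or_eq_some {α : Type} {o₁ o₂ : Option α} {a b c : α}
    (ha : o₁ = some a ∨ o₂ = some a) (hb : o₁ = some b ∨ o₂ = some b)
    (hc : o₁ = some c ∨ o₂ = some c) (hba : b ≠ a) (hca : c ≠ a) : b = c := by
  rcases ha with rfl | rfl <;> rcases hb with hb | hb <;> rcases hc with hc | hc <;> simp_all

section Readable

variable {A : Type}

/- `cancelLeft p ℓ` (`cancelRight p ℓ`) is the rule which, applied at state `p`, cancels the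
letter `ℓ` immediately to the left (right) of `p`; `r₁₃^{±1}` and `r₂₁^{±1}` change no tape and
need an empty `Lp`- resp. `pR`-sector. -/
def cancelLeft : ZQ → ZY A × Bool → Option (ZRul A)
  | .p1, ((a, true), true) => some (.r1 a, false)
  | .p1, ((a, true), false) => some (.r1 a, true)
  | .p1, ((a, false), true) => some (.r12 a, false)
  | .p2, ((a, false), false) => some (.r2 a, false)
  | .p2, ((a, false), true) => some (.r2 a, true)
  | .p2, ((a, true), true) => some (.r12 a, true)
  | .p3, ((a, false), false) => some (.r3 a, false)
  | .p3, ((a, false), true) => some (.r3 a, true)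
  | _, _ => none

def cancelRight : ZQ → ZY A × Bool → Option (ZRul A)
  | .p1, ((a, false), false) => some (.r1 a, false)
  | .p1, ((a, false), true) => some (.r1 a, true)
  | .p2, ((a, false), true) => some (.r2 a, false)
  | .p2, ((a, false), false) => some (.r2 a, true)
  | .p3, ((a, false), true) => some (.r3 a, false)
  | .p3, ((a, false), false) => some (.r3 a, true)
  | _, _ => none

def emptyLeftRule : ZQ → Option (ZRul A)
  | .p1 => some (.r13, false)
  | .p3 => some (.r13, true)
  | _ => none

def emptyRightRule : ZQ → Option (ZRul A)
  | .p2 => some (.r21, false)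
  | .p1 => some (.r21, true)
  | _ => none

def leftRule (p : ZQ) (x : Wrd (ZY A)) : Option (ZRul A) :=
  match x.getLast? with
  | none => emptyLeftRule p
  | some ℓ => cancelLeft p ℓ

def rightRule (p : ZQ) : Wrd (ZY A) → Option (ZRul A)
  | [] => emptyRightRule p
  | ℓ :: _ => cancelRight p ℓ

def Readable (θ : ZRul A) (p : ZQ) (x y : Wrd (ZY A)) : Prop :=
  leftRule p x = some θ ∨ rightRule p y = some θ

theorem Readable.eq {θ₀ θ₁ θ₂ : ZRul A} {p : ZQ} {x y : Wrd (ZY A)} (h₀ : Readable θ₀ p x y)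
    (h₁ : Readable θ₁ p x y) (h₂ : Readable θ₂ p x y) (h₁₀ : θ₁ ≠ θ₀) (h₂₀ : θ₂ ≠ θ₀) :
    θ₁ = θ₂ :=
  eq_of_eq_some_or_eq_some h₀ h₁ h₂ h₁₀ h₂₀

open FreeGroup

variable {θ θ' : ZRul A} {p p' : ZQ} {x y x₁ y₁ : Wrd (ZY A)} {c d : ZY A × Bool}

theorem readable_of_cancel_left_or_right (hx : FreeGroup.IsReduced x) (hy : FreeGroup.IsReduced y)
    (hx₁ : FreeGroup.IsReduced x₁) (hy₁ : FreeGroup.IsReduced y₁) (ex : mk x₁ = mk (x ++ [c]))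
    (ey : mk y₁ = mk ([d] ++ y)) (hlen : x₁.length + y₁.length = x.length + y.length)
    (hl : cancelLeft p (c.1, !c.2) = some θ) (hr : cancelRight p (d.1, !d.2) = some θ)
    (hl' : cancelLeft p' c = some θ') (hr' : cancelRight p' d = some θ') :
    Readable θ p x y ∧ Readable θ' p' x₁ y₁ := by
  rw [List.singleton_append] at ey
  rcases hx.eq_or_eq_of_mk_eq_mk_append hx₁ ex with rfl | rfl <;>
    rcases hy.eq_or_eq_of_mk_eq_mk_cons hy₁ ey with rfl | rfl
  · simp at hlen; omega
  · exact ⟨.inl (by simp [leftRule, hl]), .inr (by simp [rightRule, hr'])⟩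
  · exact ⟨.inr (by simp [rightRule, hr]), .inl (by simp [leftRule, hl'])⟩
  · simp at hlen; omega

theorem readable_of_replace_last (hx : FreeGroup.IsReduced x) (hy : FreeGroup.IsReduced y)
    (hx₁ : FreeGroup.IsReduced x₁) (hy₁ : FreeGroup.IsReduced y₁) (ex : mk x₁ = mk (x ++ [c, d]))
    (ey : mk y₁ = mk ([] ++ y)) (hlen : x₁.length + y₁.length = x.length + y.length)
    (hcd : d.1 ≠ c.1) (hl : cancelLeft p (c.1, !c.2) = some θ)
    (hl' : cancelLeft p' d = some θ') :
    Readable θ p x y ∧ Readable θ' p' x₁ y₁ := by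
  obtain rfl : y₁ = y := hy₁.eq_of_mk_eq hy ey
  obtain ⟨t, rfl, rfl⟩ := hx.exists_eq_of_mk_eq_mk_append_pair hx₁ ex hcd (by omega)
  exact ⟨.inl (by simp [leftRule, hl]), .inl (by simp [leftRule, hl'])⟩

theorem readable_of_left_eq_nil (hx : x = []) (hx₁ : FreeGroup.IsReduced x₁)
    (ex : mk x₁ = mk (x ++ [])) (hl : emptyLeftRule p = some θ)
    (hl' : emptyLeftRule p' = some θ') :
    Readable θ p x y ∧ Readable θ' p' x₁ y₁ := by
  subst hx
  obtain rfl : x₁ = [] := hx₁.eq_of_mk_eq .nil ex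
  exact ⟨.inl (by simp [leftRule, hl]), .inl (by simp [leftRule, hl'])⟩

theorem readable_of_right_eq_nil (hy : y = []) (hy₁ : FreeGroup.IsReduced y₁)
    (ey : mk y₁ = mk ([] ++ y)) (hr : emptyRightRule p = some θ)
    (hr' : emptyRightRule p' = some θ') :
    Readable θ p x y ∧ Readable θ' p' x₁ y₁ := by
  subst hy
  obtain rfl : y₁ = [] := hy₁.eq_of_mk_eq .nil ey
  exact ⟨.inr (by simp [rightRule, hr]), .inr (by simp [rightRule, hr'])⟩

theorem readable_of_length_eq {u v : Wrd (ZY A)} (hp : isP p)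
    (hact : zact A θ p = some (u, p', v)) (hx : FreeGroup.IsReduced x) (hy : FreeGroup.IsReduced y)
    (hx₁ : FreeGroup.IsReduced x₁) (hy₁ : FreeGroup.IsReduced y₁) (ex : mk x₁ = mk (x ++ u))
    (ey : mk y₁ = mk (v ++ y)) (h13 : θ.1 = .r13 → x = []) (h21 : θ.1 = .r21 → y = [])
    (hlen : x₁.length + y₁.length = x.length + y.length) :
    Readable θ p x y ∧ Readable (zinv A θ) p' x₁ y₁ := by
  obtain ⟨n, b⟩ := θ
  rcases hp with rfl | rfl | rfl <;> cases b <;> cases n <;>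
    simp only [zact, zactN, reduceCtorEq, Option.some.injEq, Prod.mk.injEq] at hact <;>
    obtain ⟨rfl, rfl, rfl⟩ := hact <;>
    first
    | exact readable_of_cancel_left_or_right hx hy hx₁ hy₁ ex ey hlen rfl rfl rfl rfl
    | exact readable_of_replace_last hx hy hx₁ hy₁ ex ey hlen (by simp) rfl rfl
    | exact readable_of_left_eq_nil (h13 rfl) hx₁ ex rfl rfl
    | exact readable_of_right_eq_nil (h21 rfl) hy₁ ey rfl rfl

end Readable

section Step

variable {Q Y : Type} [Inhabited Q] {M : Machine Q Y}

theorem AdmWord.ext {W W' : AdmWord M} (hq : W.qs = W'.qs) (ht : W.tapes = W'.tapes) :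
    W = W' := by
  cases W; cases W'; subst hq ht; rfl

theorem AdmWord.isReduced_tape (W : AdmWord M) (j : ℕ) :
    FreeGroup.IsReduced (W.tapes.getD j []) :=
  isReduced_iff.mp (W.tred j)

theorem Step.right_unique {r : Rule Q Y} {W W₁ W₂ : AdmWord M} (h₁ : Step M r W W₁)
    (h₂ : Step M r W W₂) : W₁ = W₂ := by
  obtain ⟨hl₁, -, ho₁, ht₁⟩ := h₁
  obtain ⟨hl₂, -, ho₂, ht₂⟩ := h₂
  have hqd : ∀ j < W.qs.length, qd W₁.qs j = qd W₂.qs j := by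
    intro j hj
    obtain ⟨u, v, hu⟩ := ho₁ j hj
    obtain ⟨u', v', hu'⟩ := ho₂ j hj
    rw [hu] at hu'
    simp only [Option.some.injEq, Prod.mk.injEq] at hu'
    exact hu'.2.1
  have hqs : W₁.qs = W₂.qs := by
    refine List.ext_getElem (by omega) fun j hj₁ hj₂ => ?_
    simpa [qd, List.getD_eq_getElem, hj₁, hj₂] using hqd j (by omega)
  have htapes : W₁.tapes = W₂.tapes := by
    refine List.ext_getElem (by have := W₁.hlen; have := W₂.hlen; omega) fun j hj₁ hj₂ => ?_
    have hj : j + 1 < W.qs.length := by have := W₁.hlen; omega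
    obtain ⟨u, v, hu⟩ := ho₁ j (by omega)
    obtain ⟨u', v', hu'⟩ := ho₁ (j + 1) hj
    have e₁ := ht₁ j hj u v u' v' hu hu'
    have e₂ := ht₂ j hj u v u' v' (hqd j (by omega) ▸ hu) (hqd (j + 1) hj ▸ hu')
    simpa [List.getD_eq_getElem, hj₁, hj₂] using
      (W₁.isReduced_tape j).eq_of_mk_eq (W₂.isReduced_tape j) (e₁.trans e₂.symm)
  exact AdmWord.ext hqs htapes

end Step

section ZStep

variable {A : Type} {θ : ZRul A} {W W₁ : AdmWord (ZM A)} {p : ZQ}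

theorem zact_L (θ : ZRul A) : zact A θ .L = some ([], .L, []) := by
  obtain ⟨n, b⟩ := θ; cases b <;> cases n <;> rfl

theorem zact_R (θ : ZRul A) : zact A θ .R = some ([], .R, []) := by
  obtain ⟨n, b⟩ := θ; cases b <;> cases n <;> rfl

theorem isP_of_zact {p' : ZQ} {u v : Wrd (ZY A)} (hp : isP p)
    (h : zact A θ p = some (u, p', v)) : isP p' := by
  obtain ⟨n, b⟩ := θ
  rcases hp with rfl | rfl | rfl <;> cases b <;> cases n <;>
    simp [zact, zactN, isP] at h ⊢ <;> simp [h.2.1]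

theorem Step.exists_zact (hp : isP p) (hq : W.qs = [(.L, true), (p, true), (.R, true)])
    (hs : Step (ZM A) (zrule A θ) W W₁) :
    ∃ u p' v, zact A θ p = some (u, p', v) ∧ W₁.qs = [(.L, true), (p', true), (.R, true)] ∧
      FreeGroup.mk (W₁.tapes.getD 0 []) = FreeGroup.mk (W.tapes.getD 0 [] ++ u) ∧
      FreeGroup.mk (W₁.tapes.getD 1 []) = FreeGroup.mk (v ++ W.tapes.getD 1 []) ∧
      (θ.1 = .r13 → W.tapes.getD 0 [] = []) ∧ (θ.1 = .r21 → W.tapes.getD 1 [] = []) := by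
  obtain ⟨hlen, hys, hocc, htape⟩ := hs
  have h3 : W.qs.length = 3 := by simp [hq]
  obtain ⟨a₀, a₁, a₂, hq₁⟩ := List.length_eq_three.mp (hlen ▸ h3)
  obtain ⟨_, _, h0⟩ := hocc 0 (by omega)
  obtain ⟨_, _, h1⟩ := hocc 1 (by omega)
  obtain ⟨_, _, h2⟩ := hocc 2 (by omega)
  simp only [hq, hq₁, qd, occRepl, zrule, zact_L, zact_R, List.getD_cons_zero,
    List.getD_cons_succ, Option.map_some, Option.map_eq_some_iff] at h0 h1 h2
  simp only [Option.some.injEq, Prod.mk.injEq] at h0 h2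
  obtain ⟨-, rfl, -⟩ := h0
  obtain ⟨-, rfl, -⟩ := h2
  obtain ⟨⟨u, p', v⟩, hact, h1⟩ := h1
  simp only [Prod.mk.injEq] at h1
  obtain ⟨rfl, ⟨rfl, -⟩, rfl⟩ := h1
  have hsec : secR (ZM A) (p, true) = 1 := by rcases hp with rfl | rfl | rfl <;> rfl
  refine ⟨u, p', v, hact, hq₁, ?_, ?_, ?_, ?_⟩
  · simpa using htape 0 (by omega) [] [] u v (by simp [hq, hq₁, qd, occRepl, zrule, zact_L])
      (by simp [hq, hq₁, qd, occRepl, zrule, hact])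
  · simpa using htape 1 (by omega) u v [] [] (by simp [hq, hq₁, qd, occRepl, zrule, hact])
      (by simp [hq, hq₁, qd, occRepl, zrule, zact_R])
  · refine fun h13 => List.eq_nil_iff_forall_not_mem.mpr fun ℓ hℓ => ?_
    have := hys 0 (by omega) ℓ hℓ
    simp [hq, qd, secR, ZM, zrule, zys, h13, zysN] at this
  · refine fun h21 => List.eq_nil_iff_forall_not_mem.mpr fun ℓ hℓ => ?_
    have := hys 1 (by omega) ℓ hℓ
    simp [hq, qd, hsec, zrule, zys, h21, zysN] at this

theorem wlen_eq_of_qs_eq {a b c : ZQ × Bool} (hq : W.qs = [a, b, c]) :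
    wlen W = 3 + (W.tapes.getD 0 []).length + (W.tapes.getD 1 []).length := by
  obtain ⟨x, y, ht⟩ := List.length_eq_two.mp (show W.tapes.length = 2 by
    have := W.hlen; simp [hq] at this; omega)
  simp [wlen, alen, hq, ht]; omega

theorem baseLpR_of_step (hb : baseLpR W) (hs : Step (ZM A) (zrule A θ) W W₁) :
    baseLpR W₁ := by
  obtain ⟨p, hp, hq⟩ := hb
  obtain ⟨u, p', v, hact, hq₁, -⟩ := hs.exists_zact hp hq
  exact ⟨p', isP_of_zact hp hact, hq₁⟩

def ReadableAt (θ : ZRul A) (W : AdmWord (ZM A)) : Prop :=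
  Readable θ (qd W.qs 1).1 (W.tapes.getD 0 []) (W.tapes.getD 1 [])

theorem readableAt_of_step (hb : baseLpR W) (hs : Step (ZM A) (zrule A θ) W W₁)
    (hlen : wlen W₁ = wlen W) : ReadableAt θ W ∧ ReadableAt (zinv A θ) W₁ := by
  obtain ⟨p, hp, hq⟩ := hb
  obtain ⟨u, p', v, hact, hq₁, ex, ey, h13, h21⟩ := hs.exists_zact hp hq
  rw [wlen_eq_of_qs_eq hq, wlen_eq_of_qs_eq hq₁] at hlen
  simpa [ReadableAt, qd, hq, hq₁] using readable_of_length_eq hp hact (W.isReduced_tape 0)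
    (W.isReduced_tape 1) (W₁.isReduced_tape 0) (W₁.isReduced_tape 1) ex ey h13 h21 (by omega)

end ZStep

namespace ZComp

variable {A : Type}

theorem baseLpR_W (c : ZComp A) (h : baseLpR (c.W 0)) : ∀ i ≤ c.t, baseLpR (c.W i)
  | 0, _ => h
  | i + 1, hi => baseLpR_of_step (c.baseLpR_W h i (by omega)) (c.steps i (by omega))

theorem W_succ_eq {c c' : ZComp A} {i : ℕ} (hi : i < c.t) (hi' : i < c'.t)
    (hW : c.W i = c'.W i) (hh : c.h i = c'.h i) : c.W (i + 1) = c'.W (i + 1) :=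
  (c.steps i hi).right_unique (by rw [hW, hh]; exact c'.steps i hi')

theorem h_succ_eq {c c' : ZComp A} {i : ℕ} (hi : i + 1 < c.t) (hi' : i + 1 < c'.t)
    (hb : baseLpR (c.W i)) (hW₁ : c.W (i + 1) = c'.W (i + 1)) (hh : c.h i = c'.h i)
    (hlen : wlen (c.W (i + 1)) = wlen (c.W i))
    (hlen₁ : wlen (c.W (i + 2)) = wlen (c.W (i + 1)))
    (hlen₁' : wlen (c'.W (i + 2)) = wlen (c'.W (i + 1))) : c.h (i + 1) = c'.h (i + 1) := by
  have hs := c.steps i (by omega)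
  have hb₁ := baseLpR_of_step hb hs
  have hinv := (readableAt_of_step hb hs hlen).2
  have hnext := (readableAt_of_step hb₁ (c.steps (i + 1) hi) hlen₁).1
  have hnext' := (readableAt_of_step (hW₁ ▸ hb₁) (c'.steps (i + 1) hi') hlen₁').1
  rw [← hW₁] at hnext'
  exact Readable.eq hinv hnext hnext' (c.red i hi) (hh ▸ c'.red i hi')

end ZComp

theorem statement_6_general (A : Type) (t : ℕ) (θ : ZRul A)
    (c c' : ZComp A) (hct : c.t = t) (hct' : c'.t = t)
    (hb : baseLpR (c.W 0)) (h0 : c.W 0 = c'.W 0)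
    (hr : c.h 0 = θ) (hr' : c'.h 0 = θ)
    (hconst : ∀ i ≤ t, wlen (c.W i) = wlen (c.W 0))
    (hconst' : ∀ i ≤ t, wlen (c'.W i) = wlen (c'.W 0)) :
    (∀ i ≤ t, c.W i = c'.W i) ∧ ∀ i < t, c.h i = c'.h i := by
  subst hct
  have hbase := c.baseLpR_W hb
  have hlen : ∀ i < c.t, wlen (c.W (i + 1)) = wlen (c.W i) := fun i hi =>
    (hconst _ hi).trans (hconst _ hi.le).symm
  have hlen' : ∀ i < c.t, wlen (c'.W (i + 1)) = wlen (c'.W i) := fun i hi =>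
    (hconst' _ hi).trans (hconst' _ hi.le).symm
  have hagree : ∀ i < c.t, c.W i = c'.W i ∧ c.h i = c'.h i := by
    intro i
    induction i with
    | zero => exact fun _ => ⟨h0, hr.trans hr'.symm⟩
    | succ i ih =>
      intro hi
      obtain ⟨hW, hh⟩ := ih (by omega)
      have hW₁ := ZComp.W_succ_eq (by omega) (by omega) hW hh
      exact ⟨hW₁, ZComp.h_succ_eq hi (by omega) (hbase i (by omega)) hW₁ hh
        (hlen i (by omega)) (hlen (i + 1) hi) (hlen' (i + 1) hi)⟩
  refine ⟨fun i hi => ?_, fun i hi => (hagree i hi).2⟩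
  cases i with
  | zero => exact h0
  | succ i => exact ZComp.W_succ_eq (by omega) (by omega) (hagree i hi).1 (hagree i hi).2

/-- Lemma 2.6.  For `W` with base `LpR`, a rule `θ`
applicable to `W` and `t > 1`, there is at most one reduced computation of
length `t` starting at `W` with the rule `θ` in which all words have the
same length. -/
theorem statement_6 (A : Type) (t : ℕ) (ht : 1 < t) (θ : ZRul A)
    (c c' : ZComp A) (hct : c.t = t) (hct' : c'.t = t)
    (hb : baseLpR (c.W 0)) (h0 : c.W 0 = c'.W 0)
    (hr : c.h 0 = θ) (hr' : c'.h 0 = θ)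
    (hconst : ∀ i ≤ t, wlen (c.W i) = wlen (c.W 0))
    (hconst' : ∀ i ≤ t, wlen (c'.W i) = wlen (c'.W 0)) :
    (∀ i ≤ t, c.W i = c'.W i) ∧ ∀ i < t, c.h i = c'.h i :=
  statement_6_general A t θ c c' hct hct' hb h0 hr hr' hconst hconst'

end SM
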